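/- Let S be a finite involutory semigroup in which every idempotent e satisfies e ≤_J e*·e. Then there exists a positive integer N such that x^N = (x^N·(x^N)*)^N·x^N for all x ∈ S. -/
import Mathlib


/-- `a ≤_J b`: `a` lies in the two-sided ideal generated by `b`. -/
def leJ {S : Type*} [Semigroup S] (a b : S) : Prop :=
  a = b ∨ (∃ u, a = b * u) ∨ (∃ u, a = u * b) ∨ (∃ u v, a = u * b * v)

/-- `spow x N` is the `N`-th power of `x` in a semigroup, for `N ≥ 1`. -/
def spow {S : Type*} [Semigroup S] (x : S) : ℕ → S
  | 0 => x
  | 1 => x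
  | (n + 2) => spow x (n + 1) * x

section Aux

variable {S : Type*} [Semigroup S]

lemma spow_one (x : S) : spow x 1 = x := rfl

lemma spow_succ (x : S) (n : ℕ) (hn : 1 ≤ n) : spow x (n + 1) = spow x n * x := by
  obtain ⟨m, rfl⟩ : ∃ m, n = m + 1 := ⟨n - 1, by omega⟩
  rfl

lemma spow_succ' (x : S) (n : ℕ) (hn : 1 ≤ n) : spow x (n + 1) = x * spow x n := by
  induction n with
  | zero => omega
  | succ m ih =>
    rcases Nat.eq_zero_or_pos m with hm | hm
    · subst hm; rfl
    · rw [spow_succ x (m+1) (by omega), ih hm, mul_assoc, ← spow_succ x m hm, ih hm]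

lemma spow_add (x : S) (a : ℕ) (ha : 1 ≤ a) :
    ∀ b, 1 ≤ b → spow x (a + b) = spow x a * spow x b := by
  intro b
  induction b with
  | zero => omega
  | succ m ih =>
    intro _
    rcases Nat.eq_zero_or_pos m with hm | hm
    · subst hm
      rw [spow_succ x a ha, spow_one]
    · rw [show a + (m+1) = (a + m) + 1 by omega, spow_succ x (a+m) (by omega),
          ih hm, spow_succ x m hm, mul_assoc]

lemma one_le_mul_nat {a b : ℕ} (ha : 1 ≤ a) (hb : 1 ≤ b) : 1 ≤ a * b :=
  le_trans ha (Nat.le_mul_of_pos_right a hb)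

lemma spow_spow (x : S) (a : ℕ) (ha : 1 ≤ a) :
    ∀ b, 1 ≤ b → spow (spow x a) b = spow x (a * b) := by
  intro b
  induction b with
  | zero => omega
  | succ m ih =>
    intro _
    rcases Nat.eq_zero_or_pos m with hm | hm
    · subst hm; rw [spow_one, Nat.mul_one]
    · rw [spow_succ (spow x a) m hm, ih hm,
          ← spow_add x (a*m) (one_le_mul_nat ha hm) a ha,
          show a * m + a = a * (m+1) by ring]

lemma spow_idem {d : S} (hd : d * d = d) : ∀ m, 1 ≤ m → spow d m = d := by
  intro m
  induction m with
  | zero => omega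
  | succ k ih =>
    intro _
    rcases Nat.eq_zero_or_pos k with hk | hk
    · subst hk; rfl
    · rw [spow_succ d k hk, ih hk, hd]

lemma idem_of_period (x : S) (i j : ℕ) (hij : i < j)
    (heq : spow x (i+1) = spow x (j+1)) :
    ∃ k, 1 ≤ k ∧ spow x k * spow x k = spow x k := by
  set a := i + 1 with ha_def
  set p := j - i with hp_def
  have hp : 1 ≤ p := by omega
  have ha : 1 ≤ a := by omega
  have hbase : spow x (a + p) = spow x a := by
    rw [show a + p = j + 1 by omega]
    exact heq.symm
  have hstep : ∀ s, spow x (a + s + p) = spow x (a + s) := by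
    intro s
    rcases Nat.eq_zero_or_pos s with hs | hs
    · subst hs; simpa using hbase
    · rw [show a + s + p = (a + p) + s by omega, spow_add x (a+p) (by omega) s hs,
          hbase, ← spow_add x a ha s hs]
  have hper : ∀ t s, spow x (a + s + t * p) = spow x (a + s) := by
    intro t
    induction t with
    | zero => simp
    | succ m ih =>
      intro s
      rw [show a + s + (m+1) * p = a + (s + m * p) + p by rw [Nat.succ_mul]; omega,
          hstep (s + m * p), show a + (s + m * p) = a + s + m * p by omega, ih s]
  have hk : 1 ≤ a * p := one_le_mul_nat ha hp
  have hak : a ≤ a * p := Nat.le_mul_of_pos_right a hp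
  refine ⟨a * p, hk, ?_⟩
  rw [← spow_add x (a*p) hk (a*p) hk,
      show a * p + a * p = a + (a * p - a) + a * p by omega,
      hper a (a * p - a), show a + (a * p - a) = a * p by omega]

lemma exists_idem_pow [Finite S] (x : S) :
    ∃ k, 1 ≤ k ∧ spow x k * spow x k = spow x k := by
  obtain ⟨i, j, hne, heq⟩ :=
    Finite.exists_ne_map_eq_of_infinite (fun n : ℕ => spow x (n + 1))
  rcases lt_or_gt_of_ne hne with hlt | hlt
  · exact idem_of_period x i j hlt heq
  · exact idem_of_period x j i hlt heq.symm

lemma exists_uniform [Finite S] :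
    ∃ N, 1 ≤ N ∧ ∀ x : S, spow x N * spow x N = spow x N := by
  cases isEmpty_or_nonempty S with
  | inl hE => exact ⟨1, le_refl 1, fun x => (hE.false x).elim⟩
  | inr hN =>
    have : Fintype S := Fintype.ofFinite S
    choose k hk1 hk2 using exists_idem_pow (S := S)
    refine ⟨∏ x : S, k x, Finset.one_le_prod' (fun i _ => hk1 i), fun x => ?_⟩
    obtain ⟨m, hm⟩ := Finset.dvd_prod_of_mem k (Finset.mem_univ x)
    have hprod : 1 ≤ ∏ x : S, k x := Finset.one_le_prod' (fun i _ => hk1 i)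
    have hm1 : 1 ≤ m := by
      rcases Nat.eq_zero_or_pos m with h0 | h0
      · subst h0; rw [Nat.mul_zero] at hm; omega
      · exact h0
    rw [hm, ← spow_spow x (k x) (hk1 x) m hm1, spow_idem (hk2 x) m hm1]
    exact hk2 x

lemma pump (a u c : S) (h : a = u * a * c) :
    ∀ k, 1 ≤ k → a = spow u k * a * spow c k := by
  intro k
  induction k with
  | zero => omega
  | succ m ih =>
    intro _
    rcases Nat.eq_zero_or_pos m with hm | hm
    · subst hm; exact h
    · calc a = spow u m * a * spow c m := ih hm
        _ = spow u m * (u * a * c) * spow c m := by rw [← h]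
        _ = spow u (m+1) * a * spow c (m+1) := by
            rw [spow_succ u m hm, spow_succ' c m hm]
            simp only [mul_assoc]

lemma absorb (a U C : S) (hU : U * U = U) (hC : C * C = C) (h : a = U * a * C) :
    a = U * a := by
  have h1 : a * C = a := by
    conv_lhs => rw [h]
    rw [mul_assoc, hC, ← h]
  conv_lhs => rw [h]
  rw [mul_assoc, h1]

lemma spow_shape (u v : S) : ∀ k, 1 ≤ k → ∃ r, spow (u * v) k = r * v := by
  intro k
  induction k with
  | zero => omega
  | succ m ih =>
    intro _
    rcases Nat.eq_zero_or_pos m with hm | hm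
    · subst hm; exact ⟨u, rfl⟩
    · obtain ⟨r, hr⟩ := ih hm
      refine ⟨r * v * u, ?_⟩
      rw [spow_succ (u*v) m hm, hr]
      simp only [mul_assoc]

lemma key [StarMul S] {N : ℕ} (hN : 1 ≤ N)
    (hNall : ∀ s : S, spow s N * spow s N = spow s N)
    (d : S) (hd : d * d = d) (hle : leJ d (star d * d)) :
    ∃ t, star d = star d * d * t := by
  have h1 : ∃ u c, d = u * (star d * d) * c := by
    rcases hle with hh | ⟨u, hh⟩ | ⟨u, hh⟩ | ⟨u, v, hh⟩
    · exact ⟨d, d, by rw [← hh, hd, hd]⟩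
    · exact ⟨d, u, by rw [mul_assoc, ← hh, hd]⟩
    · exact ⟨u, d, by rw [← hh, hd]⟩
    · exact ⟨u, v, hh⟩
  obtain ⟨u, c, h1⟩ := h1
  have h2 : d = (u * star d) * d * c := by
    conv_lhs => rw [h1]
    simp only [mul_assoc]
  have h3 : d = spow (u * star d) N * d * spow c N := pump _ _ _ h2 N hN
  have h4 : d = spow (u * star d) N * d := absorb _ _ _ (hNall _) (hNall _) h3
  obtain ⟨r, hr⟩ := spow_shape u (star d) N hN
  rw [hr] at h4
  refine ⟨star r, ?_⟩
  calc star d = star (r * star d * d) := by rw [← h4]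
    _ = star d * star (r * star d) := by rw [star_mul]
    _ = star d * (star (star d) * star r) := by rw [star_mul]
    _ = star d * (d * star r) := by rw [star_star]
    _ = star d * d * star r := by rw [mul_assoc]

lemma finish_aux {N : ℕ} (hN : 1 ≤ N)
    (hNall : ∀ s : S, spow s N * spow s N = spow s N)
    (g e y z : S) (hy : g = g * g * y) (hz : e = g * z) :
    e = spow g N * e := by
  have hgN : spow g N * g = g := by
    rcases Nat.lt_or_ge N 2 with h2 | h2
    · have hN1 : N = 1 := by omega
      subst hN1
      exact hNall g
    · have hk : ∀ k, 1 ≤ k → g = spow g (k+1) * spow y k := by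
        intro k
        induction k with
        | zero => omega
        | succ m ih =>
          intro _
          rcases Nat.eq_zero_or_pos m with hm | hm
          · subst hm
            calc g = g * g * y := hy
              _ = spow g 2 * spow y 1 := rfl
          · calc g = spow g (m+1) * spow y m := ih hm
              _ = spow g m * g * spow y m := by rw [spow_succ g m hm]
              _ = spow g m * (g * g * y) * spow y m := by rw [← hy]
              _ = spow g (m+2) * spow y (m+1) := by
                  rw [spow_succ g (m+1) (by omega), spow_succ g m hm,
                      spow_succ' y m hm]
                  simp only [mul_assoc]
      have h5 : g = spow g N * spow y (N-1) := by
        have := hk (N-1) (by omega)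
        rwa [show N - 1 + 1 = N by omega] at this
      calc spow g N * g = spow g N * (spow g N * spow y (N-1)) := by rw [← h5]
        _ = (spow g N * spow g N) * spow y (N-1) := by rw [mul_assoc]
        _ = spow g N * spow y (N-1) := by rw [hNall g]
        _ = g := h5.symm
  calc e = g * z := hz
    _ = (spow g N * g) * z := by rw [hgN]
    _ = spow g N * (g * z) := by rw [mul_assoc]
    _ = spow g N * e := by rw [← hz]

lemma main_aux [StarMul S] {N : ℕ} (hN : 1 ≤ N)
    (hNall : ∀ s : S, spow s N * spow s N = spow s N)
    (h : ∀ e : S, e * e = e → leJ e (star e * e))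
    (e : S) (he : e * e = e) :
    e = spow (e * star e) N * e := by
  have hse : star e * star e = star e := by rw [← star_mul, he]
  obtain ⟨t₁, ht₁⟩ := key hN hNall e he (h e he)
  obtain ⟨t₂, ht₂⟩ := key hN hNall (star e) hse (h (star e) hse)
  rw [star_star] at ht₂
  -- ht₂ : e = e * star e * t₂
  have hy : e * star e = (e * star e) * (e * star e) * (t₂ * t₁) := by
    calc e * star e
        = e * (star e * e * t₁) := by rw [← ht₁]
      _ = ((e * star e) * e) * t₁ := by simp only [mul_assoc]
      _ = ((e * star e) * ((e * star e) * t₂)) * t₁ := by rw [← ht₂]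
      _ = (e * star e) * (e * star e) * (t₂ * t₁) := by simp only [mul_assoc]
  exact finish_aux hN hNall (e * star e) e (t₂ * t₁) t₂ hy ht₂

end Aux

/-- If every idempotent `e` of a finite involutory semigroup satisfies
`e ≤_J e* e`, then the identity `x^N = (x^N (x^N)*)^N x^N` holds for some
positive integer `N`. -/
theorem typeB_of_all_idempotents_leJ {S : Type*} [Semigroup S] [StarMul S] [Finite S]
    (h : ∀ e : S, e * e = e → leJ e (star e * e)) :
    ∃ N : ℕ, 0 < N ∧
      ∀ x : S, spow x N = spow (spow x N * star (spow x N)) N * spow x N := by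
  obtain ⟨N, hN, hNall⟩ := exists_uniform (S := S)
  exact ⟨N, hN, fun x => main_aux hN hNall h (spow x N) (hNall x)⟩
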